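/- arXiv:math/0109035 — 3 statements merged into one kernel-verified Lean document; each statement's English description precedes it below -/
import Mathlib

section
/- Let I ⊆ S = k[x_0,...,x_n] be a homogeneous ideal that agrees with its saturation I^sat in all degrees ≥ r, and let x be a linear form that is a nonzerodivisor modulo I^sat. Then the colon ideal (I : x) agrees with I in all degrees ≥ r. -/
open MvPolynomial
attribute [local instance] MvPolynomial.gradedAlgebra

/-- The polynomial ring `S = k[x_0, …, x_n]`. -/
noncomputable abbrev MvP (k : Type*) [Field k] (n : ℕ) : Type _ := MvPolynomial (Fin (n+1)) k

/-- The irrelevant maximal ideal `m = (x_0, …, x_n)`. -/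
noncomputable def irrIdeal (k : Type*) [Field k] (n : ℕ) : Ideal (MvP k n) :=
  Ideal.span (Set.range X)

/-- The saturation `I^sat = {s : s·m^t ⊆ I for some t}` of `I`. -/
noncomputable def satIdeal {k : Type*} [Field k] {n : ℕ} (I : Ideal (MvP k n)) :
    Ideal (MvP k n) :=
  ⨆ t : ℕ, I.colon ((irrIdeal k n ^ t : Ideal (MvP k n)) : Set (MvP k n))

/-- `I` agrees with its saturation in all degrees `≥ r`. -/
def SatInDegrees {k : Type*} [Field k] {n : ℕ} (I : Ideal (MvP k n)) (r : ℤ) : Prop :=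
  ∀ d : ℕ, r ≤ (d : ℤ) → ∀ f ∈ homogeneousSubmodule (Fin (n+1)) k d, (f ∈ I ↔ f ∈ satIdeal I)

/-- The saturation degree of `I`: the least `r` from which `I` agrees with `I^sat`. -/
noncomputable def satDeg {k : Type*} [Field k] {n : ℕ} (I : Ideal (MvP k n)) : ℤ :=
  sInf {r : ℤ | SatInDegrees I r}

theorem le_satIdeal {k : Type*} [Field k] {n : ℕ} (I : Ideal (MvP k n)) : I ≤ satIdeal I :=
  calc I = I.colon ((irrIdeal k n ^ 0 : Ideal (MvP k n)) : Set (MvP k n)) := by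
        rw [pow_zero, Ideal.one_eq_top, Submodule.top_coe, Submodule.colon_univ]
    _ ≤ satIdeal I :=
        le_iSup (fun t : ℕ => I.colon ((irrIdeal k n ^ t : Ideal (MvP k n)) : Set (MvP k n))) 0

theorem colon_agrees_with_ideal_general {k : Type*} [Field k] {n : ℕ} (I : Ideal (MvP k n))
    (r : ℤ) (hsat : SatInDegrees I r)
    (x : MvP k n)
    (hnzd : ∀ f : MvP k n, x * f ∈ satIdeal I → f ∈ satIdeal I) :
    ∀ d : ℕ, r ≤ (d : ℤ) → ∀ f ∈ homogeneousSubmodule (Fin (n+1)) k d,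
      (f ∈ I.colon (Ideal.span {x}) ↔ f ∈ I) := by
  intro d hd f hf
  rw [Ideal.mem_colon_span_singleton, mul_comm]
  refine ⟨fun hxf => ?_, fun hfI => I.mul_mem_left x hfI⟩
  exact (hsat d hd f hf).mpr (hnzd f (le_satIdeal I hxf))

/-- If `I` agrees with its saturation in degrees `≥ r` and the linear form `x` is a
nonzerodivisor modulo `I^sat`, then `(I : x)` agrees with `I` in degrees `≥ r`. -/
theorem colon_agrees_with_ideal {k : Type*} [Field k] {n : ℕ} (I : Ideal (MvP k n))
    (hI : Ideal.IsHomogeneous (homogeneousSubmodule (Fin (n+1)) k) I)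
    (r : ℤ) (hsat : SatInDegrees I r)
    (x : MvP k n) (hx : x ∈ homogeneousSubmodule (Fin (n+1)) k 1)
    (hnzd : ∀ f : MvP k n, x * f ∈ satIdeal I → f ∈ satIdeal I) :
    ∀ d : ℕ, r ≤ (d : ℤ) → ∀ f ∈ homogeneousSubmodule (Fin (n+1)) k d,
      (f ∈ I.colon (Ideal.span {x}) ↔ f ∈ I) :=
  colon_agrees_with_ideal_general I r hsat x hnzd
end

section
/- For each d ≥ 1, there is an arrangement of d lines in projective 3-space over an infinite field whose defining ideal I satisfies reg(I) ≥ d. Specifically, if L is a fixed line and the d lines are general lines each meeting L in d distinct points (with L not one of the d lines), then any homogeneous f ∈ I of degree < d vanishes on L, so I has a minimal generator of degree ≥ d and reg(I) ≥ d. -/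
open MvPolynomial
attribute [local instance] MvPolynomial.gradedAlgebra

/-- An ideal generated by linear forms. -/
def IsLinearIdeal {k : Type*} [Field k] {n : ℕ} (I : Ideal (MvP k n)) : Prop :=
  ∃ T : Set (MvP k n), T ⊆ (homogeneousSubmodule (Fin (n+1)) k 1 : Submodule k (MvP k n)) ∧
    I = Ideal.span T

/-- `I` is `r`-regular (Castelnuovo–Mumford): there is a graded free resolution
`⋯ → ⊕_α S(-e_{α,i}) → ⋯ → ⊕_α S(-e_{α,0}) → I → 0` with all `e_{α,i} ≤ r + i`.
The `i`-th free module is `Fin (ρ i) → S` with generator degrees `e i`; gradedness of the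
maps is expressed by homogeneity of the matrix entries (images of the standard basis). -/
def IdealIsRegular {k : Type*} [Field k] {n : ℕ} (I : Ideal (MvP k n)) (r : ℤ) : Prop :=
  ∃ (ρ : ℕ → ℕ) (e : ∀ i, Fin (ρ i) → ℕ)
    (δ : ∀ i, (Fin (ρ (i+1)) → MvP k n) →ₗ[MvP k n] (Fin (ρ i) → MvP k n))
    (ε : (Fin (ρ 0) → MvP k n) →ₗ[MvP k n] MvP k n),
    LinearMap.range ε = I ∧
    LinearMap.ker ε = LinearMap.range (δ 0) ∧
    (∀ i, LinearMap.ker (δ i) = LinearMap.range (δ (i+1))) ∧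
    (∀ β, ε (Pi.single β 1) ∈ homogeneousSubmodule (Fin (n+1)) k (e 0 β)) ∧
    (∀ i (β : Fin (ρ (i+1))) (α : Fin (ρ i)), δ i (Pi.single β 1) α = 0 ∨
      (e i α ≤ e (i+1) β ∧
        δ i (Pi.single β 1) α ∈ homogeneousSubmodule (Fin (n+1)) k (e (i+1) β - e i α))) ∧
    (∀ i (β : Fin (ρ i)), (e i β : ℤ) ≤ r + i)

/-- The Castelnuovo–Mumford regularity of `I`, the least `r` such that `I` is `r`-regular. -/
noncomputable def idealReg {k : Type*} [Field k] {n : ℕ} (I : Ideal (MvP k n)) : ℤ :=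
  sInf {r : ℤ | IdealIsRegular I r}

/-!
Take the lines `x₃ = x₀ - cᵢ x₁ = 0` for distinct `c₀, …, c_{d-1}` and the line
`L = {x₂ = x₃ = 0}`, which meets them in the `d` distinct points `[cᵢ : 1 : 0 : 0]`. A form of
degree `< d` in the ideal `I` of the arrangement vanishes at these points of `L`, hence on `L`.
An `r`-regular ideal is generated in degrees `≤ r`, and `∏ (x₀ - cᵢ x₁) ∈ I` does not vanish on
`L`, so `I` is `r`-regular only for `r ≥ d`. As `idealReg` is an infimum (`0` for the empty set),
`I` must also be shown regular: the lines lie in the plane `x₃ = 0`, so `I = (x₃, ∏ (x₀ - cᵢ x₁))`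
is a complete intersection whose Koszul resolution makes it `d`-regular.
-/

namespace MvPolynomial

section SubstZero

variable {σ R : Type*} [CommRing R] [DecidableEq σ]

noncomputable def substZero (i : σ) : MvPolynomial σ R →ₐ[R] MvPolynomial σ R :=
  aeval (Function.update X i 0)

@[simp]
lemma substZero_X_self (i : σ) : substZero i (X i : MvPolynomial σ R) = 0 := by
  simp [substZero]

@[simp]
lemma substZero_X_of_ne {i j : σ} (h : j ≠ i) : substZero i (X j : MvPolynomial σ R) = X j := by
  simp [substZero, h]

lemma sub_substZero_mem_span_X (i : σ) (f : MvPolynomial σ R) :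
    f - substZero i f ∈ Ideal.span {X i} := by
  let π := Ideal.Quotient.mkₐ R (Ideal.span {(X i : MvPolynomial σ R)})
  have hπ : π.comp (substZero i) = π := by
    ext j
    by_cases h : j = i
    · subst h
      simp [π]
    · simp [π, h]
  rw [← Ideal.Quotient.eq, ← Ideal.Quotient.mkₐ_eq_mk R]
  exact (DFunLike.congr_fun hπ f).symm

lemma mem_span_X_pair_iff {i : σ} {g : MvPolynomial σ R} (hg : substZero i g = g)
    {f : MvPolynomial σ R} : f ∈ Ideal.span {X i, g} ↔ g ∣ substZero i f := by
  constructor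
  · intro hf
    obtain ⟨a, b, rfl⟩ := Ideal.mem_span_pair.mp hf
    simp [hg]
  · rintro ⟨h, hh⟩
    rw [← sub_add_cancel f (substZero i f), hh]
    refine Ideal.add_mem _ ?_ (Ideal.mul_mem_right _ _ (Ideal.subset_span (by simp)))
    exact Ideal.span_mono (Set.singleton_subset_iff.mpr (Set.mem_insert _ _))
      (hh ▸ sub_substZero_mem_span_X i f)

open Function in
lemma iInf_span_X_pair {k ι : Type*} [Field k] [Fintype ι] {i : σ}
    {g : ι → MvPolynomial σ k} (hg : ∀ j, substZero i (g j) = g j)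
    (hrel : Pairwise (IsRelPrime on g)) :
    ⨅ j, Ideal.span {X i, g j} = Ideal.span {X i, ∏ j, g j} := by
  have hprod : substZero i (∏ j, g j) = ∏ j, g j := by
    rw [map_prod]; exact Finset.prod_congr rfl fun j _ => hg j
  ext f
  simp only [Submodule.mem_iInf, mem_span_X_pair_iff (hg _), mem_span_X_pair_iff hprod]
  exact ⟨Fintype.prod_dvd_of_isRelPrime hrel,
    fun h j => (Finset.dvd_prod_of_mem g (Finset.mem_univ j)).trans h⟩

end SubstZero

lemma irreducible_of_isHomogeneous_one {σ k : Type*} [Field k] {p : MvPolynomial σ k}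
    (hp : p.IsHomogeneous 1) (hp0 : p ≠ 0) : Irreducible p := by
  refine irreducible_of_totalDegree_eq_one (hp.totalDegree hp0) fun x hx => ?_
  obtain ⟨m, hm⟩ := exists_coeff_ne_zero hp0
  exact isUnit_iff_ne_zero.mpr (ne_zero_of_dvd_ne_zero hm (hx m))

lemma natDegree_aeval_le_totalDegree {σ R : Type*} [CommSemiring R] {φ : σ → Polynomial R}
    (hφ : ∀ i, (φ i).natDegree ≤ 1) (f : MvPolynomial σ R) :
    (aeval φ f).natDegree ≤ f.totalDegree := by
  rw [aeval_def, eval₂_eq, Polynomial.algebraMap_eq]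
  refine Polynomial.natDegree_sum_le_of_forall_le _ _ fun m hm => ?_
  refine (Polynomial.natDegree_C_mul_le _ _).trans ?_
  refine (Polynomial.natDegree_prod_le _ _).trans ((Finset.sum_le_sum fun i _ => ?_).trans
    (le_totalDegree hm))
  exact Polynomial.natDegree_pow_le.trans (by simpa using Nat.mul_le_mul_left (m i) (hφ i))

end MvPolynomial

lemma exists_eq_of_mul_add_mul_eq_zero {R : Type*} [CommRing R] [IsDomain R]
    [DecompositionMonoid R] {f g u v : R} (hf0 : f ≠ 0) (hfg : IsRelPrime f g)
    (h : u * f + v * g = 0) : ∃ t, u = -(t * g) ∧ v = t * f := by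
  obtain ⟨t, rfl⟩ : f ∣ v :=
    hfg.dvd_of_dvd_mul_right ⟨-u, by linear_combination h⟩
  refine ⟨t, ?_, mul_comm _ _⟩
  have : f * (u + t * g) = 0 := by linear_combination h
  linear_combination (mul_eq_zero.mp this).resolve_left hf0

section Koszul

variable {k : Type*} [Field k] {n : ℕ}

/-- The Koszul resolution `0 → S(-a-b) → S(-a) ⊕ S(-b) → (f, g) → 0`; `koszulRank` is reducible
so that instance search sees `Fin (koszulRank 0)` as `Fin 2`. -/
abbrev koszulRank : ℕ → ℕ
  | 0 => 2
  | 1 => 1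
  | _ + 2 => 0

def koszulDegree (a b : ℕ) : ∀ i, Fin (koszulRank i) → ℕ
  | 0 => ![a, b]
  | 1 => ![a + b]
  | _ + 2 => Fin.elim0

noncomputable def koszulDiff (f g : MvP k n) :
    ∀ i, (Fin (koszulRank (i + 1)) → MvP k n) →ₗ[MvP k n] (Fin (koszulRank i) → MvP k n)
  | 0 => Fintype.linearCombination (MvP k n) ![![-g, f]]
  | _ + 1 => 0

lemma koszulDiff_zero_apply (f g : MvP k n) (t : Fin 1 → MvP k n) :
    koszulDiff f g 0 t = t 0 • ![-g, f] := by
  simp only [koszulDiff]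
  rw [Fintype.linearCombination_apply]
  simp

lemma ker_koszulDiff_eq_range {f g : MvP k n} (hf0 : f ≠ 0) (i : ℕ) :
    LinearMap.ker (koszulDiff f g i) = LinearMap.range (koszulDiff f g (i + 1)) := by
  match i with
  | 0 =>
    refine (LinearMap.ker_eq_bot'.mpr fun t ht => ?_).trans LinearMap.range_zero.symm
    have : t 0 * f = 0 := by
      have := congrFun ht 1
      rw [koszulDiff_zero_apply] at this
      simpa using this
    funext j
    rw [Subsingleton.elim j 0]
    exact (mul_eq_zero.mp this).resolve_right hf0
  | _ + 1 => exact Subsingleton.elim _ _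

theorem idealIsRegular_span_pair {f g : MvP k n} {a b : ℕ} (hf : f.IsHomogeneous a)
    (hg : g.IsHomogeneous b) (ha : 1 ≤ a) (hb : 1 ≤ b) (hf0 : f ≠ 0) (hfg : IsRelPrime f g) :
    IdealIsRegular (Ideal.span {f, g}) (a + b - 1) := by
  let ε := Fintype.linearCombination (MvP k n) ![f, g]
  refine ⟨koszulRank, koszulDegree a b, koszulDiff f g, ε, ?_, ?_, ker_koszulDiff_eq_range hf0,
    ?_, ?_, ?_⟩
  · rw [Fintype.range_linearCombination, Matrix.range_cons_cons_empty]
  · ext v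
    simp only [LinearMap.mem_ker, LinearMap.mem_range]
    constructor
    · intro hv
      obtain ⟨t, hu, hv⟩ := exists_eq_of_mul_add_mul_eq_zero hf0 hfg
        (by simpa [ε, Fintype.linearCombination_apply] using hv)
      refine ⟨![t], ?_⟩
      rw [koszulDiff_zero_apply]
      ext j
      fin_cases j <;> simp [hu, hv]
    · rintro ⟨t, rfl⟩
      rw [koszulDiff_zero_apply]
      simp [ε, Fintype.linearCombination_apply]
      ring
  · intro β
    fin_cases β <;> simpa [ε, mem_homogeneousSubmodule, koszulDegree]
  · rintro (_ | _ | i) β α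
    · fin_cases β
      right
      rw [koszulDiff_zero_apply]
      fin_cases α <;> simp [mem_homogeneousSubmodule, koszulDegree, hf, hg]
    · exact β.elim0
    · exact β.elim0
  · rintro (_ | _ | i) β
    · fin_cases β <;> simp [koszulDegree] <;> omega
    · fin_cases β
      simp [koszulDegree]
    · exact β.elim0

end Koszul

lemma IdealIsRegular.le_of_forall_isHomogeneous_mem {k : Type*} [Field k] {n : ℕ}
    {I J : Ideal (MvP k n)} {r : ℤ} (h : IdealIsRegular I r)
    (hJ : ∀ f ∈ I, ∀ m : ℕ, (m : ℤ) ≤ r → f.IsHomogeneous m → f ∈ J) : I ≤ J := by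
  obtain ⟨ρ, e, δ, ε, hrange, -, -, hhom, -, hdeg⟩ := h
  rw [← hrange]
  rintro _ ⟨v, rfl⟩
  rw [← Finset.univ_sum_single v, map_sum]
  refine Ideal.sum_mem _ fun β _ => ?_
  rw [show Pi.single β (v β) = v β • Pi.single β 1 by
    rw [← Pi.single_smul', smul_eq_mul, mul_one], map_smul, smul_eq_mul]
  exact J.mul_mem_left _ (hJ _ (hrange ▸ LinearMap.mem_range_self ε _) _ (by simpa using hdeg 0 β)
    ((mem_homogeneousSubmodule _ _).mp (hhom β)))

section Arrangement

variable {k ι : Type*} [Field k]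

noncomputable def lineForm (c : ι → k) (i : ι) : MvP k 3 := X 0 - C (c i) * X 1

noncomputable def lineIdeal (c : ι → k) (i : ι) : Ideal (MvP k 3) :=
  Ideal.span {X 3, lineForm c i}

/-- Restriction to the line `L = {x₂ = x₃ = 0}` in the chart `x₁ = 1`; `L` meets the `i`-th line
at `[c i : 1 : 0 : 0]`. -/
noncomputable def restrictToLine : MvP k 3 →ₐ[k] Polynomial k := aeval ![Polynomial.X, 1, 0, 0]

variable (c : ι → k)

@[simp]
lemma eval_lineForm (p : Fin 4 → k) (i : ι) : eval p (lineForm c i) = p 0 - c i * p 1 := by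
  simp [lineForm]

lemma isHomogeneous_lineForm (i : ι) : (lineForm c i).IsHomogeneous 1 :=
  (isHomogeneous_X k 0).sub (by simpa using (isHomogeneous_X k 1).C_mul (c i))

lemma isHomogeneous_prod_lineForm [Fintype ι] :
    (∏ i, lineForm c i).IsHomogeneous (Fintype.card ι) := by
  simpa using IsHomogeneous.prod Finset.univ _ _ fun i _ => isHomogeneous_lineForm c i

lemma lineForm_ne_zero (i : ι) : lineForm c i ≠ 0 := fun h => by
  simpa using congrArg (eval ![1, 0, 0, 0]) h

lemma substZero_lineForm (i : ι) : substZero 3 (lineForm c i) = lineForm c i := by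
  simp [lineForm]

lemma eval_eq_zero_of_mem_lineIdeal {f : MvP k 3} {i : ι} (hf : f ∈ lineIdeal c i) :
    eval ![c i, 1, 0, 0] f = 0 := by
  obtain ⟨a, b, rfl⟩ := Ideal.mem_span_pair.mp hf
  simp

lemma linearIndependent_X_lineForm (i : ι) : LinearIndependent k ![X 3, lineForm c i] :=
  (LinearIndependent.pair_iff' (X_ne_zero 3)).mpr fun a h => by
    simpa [smul_eq_C_mul] using congrArg (eval ![1, 0, 0, 0]) h

lemma prod_lineForm_mem_iInf_lineIdeal [Fintype ι] : ∏ i, lineForm c i ∈ ⨅ i, lineIdeal c i :=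
  (Submodule.mem_iInf _).mpr fun i =>
    Ideal.mem_of_dvd _ (Finset.dvd_prod_of_mem _ (Finset.mem_univ i)) (Ideal.subset_span (by simp))

lemma isRelPrime_X_prod_lineForm [Fintype ι] : IsRelPrime (X 3) (∏ i, lineForm c i) :=
  X_prime.irreducible.isRelPrime_iff_not_dvd.mpr fun h => by
    simpa using map_dvd (eval ![1, 0, 0, 0]) h

lemma eval_restrictToLine (f : MvP k 3) (t : k) :
    (restrictToLine f).eval t = eval ![t, 1, 0, 0] f := by
  rw [← Polynomial.coe_aeval_eq_eval, restrictToLine, comp_aeval_apply, aeval_eq_eval]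
  congr 2
  funext j
  fin_cases j <;> simp

lemma restrictToLine_prod_lineForm_ne_zero [Fintype ι] :
    restrictToLine (∏ i, lineForm c i) ≠ 0 := by
  simp [map_prod, restrictToLine, lineForm, Finset.prod_ne_zero_iff, Polynomial.X_sub_C_ne_zero]

variable {c}

lemma lineIdeal_injective (hc : Function.Injective c) : Function.Injective (lineIdeal c) :=
  fun i j h => by
    have hi : lineForm c i ∈ lineIdeal c j := h ▸ Ideal.subset_span (by simp)
    exact (hc (by simpa [sub_eq_zero] using eval_eq_zero_of_mem_lineIdeal c hi)).symm

open Function in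
lemma pairwise_isRelPrime_lineForm (hc : Function.Injective c) :
    Pairwise (IsRelPrime on lineForm c) :=
  fun i j hij => (irreducible_of_isHomogeneous_one (isHomogeneous_lineForm c i)
    (lineForm_ne_zero c i)).isRelPrime_iff_not_dvd.mpr fun hdvd =>
      hij (hc (by simpa [sub_eq_zero] using map_dvd (eval ![c i, 1, 0, 0]) hdvd))

lemma iInf_lineIdeal [Fintype ι] (hc : Function.Injective c) :
    ⨅ i, lineIdeal c i = Ideal.span {X 3, ∏ i, lineForm c i} :=
  iInf_span_X_pair (substZero_lineForm c) (pairwise_isRelPrime_lineForm hc)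

lemma idealIsRegular_iInf_lineIdeal [Fintype ι] (hc : Function.Injective c)
    (hι : 1 ≤ Fintype.card ι) :
    IdealIsRegular (⨅ i, lineIdeal c i) (Fintype.card ι) := by
  rw [iInf_lineIdeal hc]
  simpa using idealIsRegular_span_pair (isHomogeneous_X k 3) (isHomogeneous_prod_lineForm c)
    le_rfl hι (X_ne_zero 3) (isRelPrime_X_prod_lineForm c)

lemma restrictToLine_eq_zero_of_mem_iInf_lineIdeal [Fintype ι] (hc : Function.Injective c)
    {f : MvP k 3} (hf : f ∈ ⨅ i, lineIdeal c i) {m : ℕ} (hfm : f.IsHomogeneous m)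
    (hm : m < Fintype.card ι) : restrictToLine f = 0 := by
  refine Polynomial.eq_zero_of_natDegree_lt_card_of_eval_eq_zero _ hc (fun i => ?_) ?_
  · rw [eval_restrictToLine]
    exact eval_eq_zero_of_mem_lineIdeal c ((Submodule.mem_iInf _).mp hf i)
  · refine ((natDegree_aeval_le_totalDegree (fun j => ?_) f).trans hfm.totalDegree_le).trans_lt hm
    fin_cases j <;> simp

lemma card_le_of_idealIsRegular_iInf_lineIdeal [Fintype ι] (hc : Function.Injective c) {r : ℤ}
    (hr : IdealIsRegular (⨅ i, lineIdeal c i) r) : (Fintype.card ι : ℤ) ≤ r := by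
  by_contra! hlt
  have hker : ⨅ i, lineIdeal c i ≤ RingHom.ker (restrictToLine (k := k)) :=
    hr.le_of_forall_isHomogeneous_mem fun f hf m hm hfm =>
      restrictToLine_eq_zero_of_mem_iInf_lineIdeal hc hf hfm (by omega)
  exact restrictToLine_prod_lineForm_ne_zero c (hker (prod_lineForm_mem_iInf_lineIdeal c))

end Arrangement

/-- Sharpness: for every `d ≥ 1` there is an arrangement of `d` distinct lines in `ℙ³`
(each line cut out by two independent linear forms) whose defining ideal has
regularity at least `d`. -/
theorem exists_line_arrangement_with_large_regularity {k : Type*} [Field k] [Infinite k]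
    (d : ℕ) (hd : 1 ≤ d) :
    ∃ I : Fin d → Ideal (MvP k 3),
      (∀ i, ∃ a b : MvP k 3,
        a ∈ homogeneousSubmodule (Fin 4) k 1 ∧ b ∈ homogeneousSubmodule (Fin 4) k 1 ∧
        LinearIndependent k ![a, b] ∧ I i = Ideal.span {a, b}) ∧
      Function.Injective I ∧
      (d : ℤ) ≤ idealReg (⨅ i, I i) := by
  let c : Fin d ↪ k := Fin.valEmbedding.trans (Infinite.natEmbedding k)
  refine ⟨lineIdeal c,
    fun i => ⟨X 3, lineForm c i, ?_, ?_, linearIndependent_X_lineForm c i, rfl⟩,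
    lineIdeal_injective c.injective, ?_⟩
  · exact (mem_homogeneousSubmodule _ _).mpr (isHomogeneous_X k 3)
  · exact (mem_homogeneousSubmodule _ _).mpr (isHomogeneous_lineForm c i)
  refine le_csInf ⟨d, ?_⟩ fun r hr => ?_
  · simpa using idealIsRegular_iInf_lineIdeal c.injective (by simpa using hd)
  · simpa using card_le_of_idealIsRegular_iInf_lineIdeal c.injective hr
end

section
/- Let I_1,...,I_d be linear ideals in S = k[x_0,...,x_n] and let L be a linear ideal. For each i set J_i = I_1 ∩ ... ∩ I_{i-1} ∩ I_{i+1} ∩ ... ∩ I_d + L. Suppose a linear form x is written as x = x_1 + ... + x_d + x' with x_i ∈ I_i and x' ∈ L, and suppose f' ∈ S satisfies f' ∈ J_i for all i. Then x·f' ∈ I_1 ∩ ... ∩ I_d + L. -/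
open MvPolynomial
attribute [local instance] MvPolynomial.gradedAlgebra

/-- The key step in the saturation argument: if the linear form `x` decomposes as
`x = x_1 + ⋯ + x_d + x'` with `x_i ∈ I_i`, `x' ∈ L`, and `f'` lies in every
`J_i = ⋂_{j ≠ i} I_j + L`, then `x·f' ∈ I_1 ∩ ⋯ ∩ I_d + L`. -/
theorem mul_mem_inf_add_of_mem_partial_intersections {k : Type*} [Field k] {n d : ℕ}
    (hd : 0 < d) (I : Fin d → Ideal (MvP k n)) (L : Ideal (MvP k n))
    (hlin : ∀ i, IsLinearIdeal (I i)) (hL : IsLinearIdeal L)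
    (x : MvP k n) (hx : x ∈ homogeneousSubmodule (Fin (n+1)) k 1)
    (xi : Fin d → MvP k n) (x' : MvP k n)
    (hxi : ∀ i, xi i ∈ I i) (hx' : x' ∈ L) (hsum : x = (∑ i, xi i) + x')
    (f' : MvP k n) (hf' : ∀ i, f' ∈ (⨅ j, ⨅ (_ : j ≠ i), I j) + L) :
    x * f' ∈ (⨅ i, I i) + L := by
  have key : ∀ i, xi i * f' ∈ (⨅ i, I i) + L := by
    intro i
    have h := hf' i
    rw [Submodule.add_eq_sup] at h
    obtain ⟨g, hg, l, hl, hgl⟩ := Submodule.mem_sup.mp h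
    rw [← hgl, mul_add, Submodule.add_eq_sup]
    refine Submodule.add_mem_sup ?_ (Ideal.mul_mem_left _ _ hl)
    rw [Submodule.mem_iInf]
    intro j
    by_cases h : j = i
    · subst h; exact Ideal.mul_mem_right _ _ (hxi j)
    · exact Ideal.mul_mem_left _ _ ((Submodule.mem_iInf _).mp ((Submodule.mem_iInf _).mp hg j) h)
  rw [hsum, add_mul, Finset.sum_mul, Submodule.add_eq_sup]
  exact add_mem (Ideal.sum_mem _ fun i _ => by rw [← Submodule.add_eq_sup]; exact key i)
    (Submodule.mem_sup_right (Ideal.mul_mem_right _ _ hx'))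
end
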